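/- In the bunch setup, suppose the sequence of the Thorup–Zwick query loop is run starting from index i₁ with current endpoints alternating between u and v: set u₀ = u, v₀ = v, w₀ = p_{i₁}(u₀), and while w_t ∉ B_{v_t}, set u_{t+1} = v_t, v_{t+1} = u_t, w_{t+1} = p_{i₁ + t + 1}(u_{t+1}). If d(u, p_{i₁}(u)) ≤ i₁·d(u, v), then for every t ≥ 0 reached by the loop, d(u_t, w_t) ≤ (i₁ + t)·d(u, v). -/

import Mathlib

/-!
Along the loop the endpoints only swap, so `d(u_t, v_t) = d(u, v)` throughout, and
`w_t = p_{i₁+t}(u_t)`. If `w_t ∉ B_{v_t}`, look at the exact level `m ≥ i₁ + t` of `w_t`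
(`w_t ∈ A_m \ A_{m+1}`): not being in the bunch means `d(v_t, p_{m+1}(v_t)) ≤ d(v_t, w_t)`, and
since `A_{m+1} ⊆ A_{i₁+t+1}` the same bound holds for `p_{i₁+t+1}(v_t) = w_{t+1}`. The triangle
inequality through `u_t` then adds one `d(u, v)` per step.
-/

theorem Nat.exists_le_lt_and_not_succ {P : ℕ → Prop} {j k : ℕ} (hj : P j) (hk : ¬P k)
    (hjk : j ≤ k) : ∃ m, j ≤ m ∧ m < k ∧ P m ∧ ¬P (m + 1) := by
  classical
  have hspec : P (Nat.findGreatest P k) := Nat.findGreatest_spec hjk hj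
  have hlt : Nat.findGreatest P k < k :=
    (Nat.findGreatest_le k).lt_of_ne fun h => hk (h ▸ hspec)
  exact ⟨Nat.findGreatest P k, Nat.le_findGreatest hjk hj, hlt, hspec,
    Nat.findGreatest_is_greatest (Nat.lt_succ_self _) hlt⟩

section Bunch

variable {V : Type*} [MetricSpace V] {k : ℕ} {A : ℕ → Set V} {p : ℕ → V → V} {B : V → Set V}

theorem dist_pivot_succ_le_of_notMem_bunch (hAmono : ∀ i, A (i + 1) ⊆ A i) (hAk : A k = ∅)
    (hpmem : ∀ i ≤ k - 1, ∀ u, p i u ∈ A i)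
    (hpnear : ∀ i ≤ k - 1, ∀ u, ∀ w ∈ A i, dist u (p i u) ≤ dist u w)
    (hB : ∀ u w, w ∈ B u ↔ ∃ i < k, w ∈ A i ∧ w ∉ A (i + 1) ∧
      (i + 1 < k → dist u w < dist u (p (i + 1) u)))
    {x w : V} {j : ℕ} (hj : j + 1 ≤ k - 1) (hw : w ∈ A j) (hwB : w ∉ B x) :
    dist x (p (j + 1) x) ≤ dist x w := by
  obtain ⟨m, hjm, hmk, hwm, hwm'⟩ :=
    Nat.exists_le_lt_and_not_succ (P := (w ∈ A ·)) (k := k) hw (by simp [hAk]) (by omega)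
  rw [hB] at hwB
  push Not at hwB
  obtain ⟨hm_succ, hfar⟩ := hwB m hmk hwm hwm'
  have hpivot : p (m + 1) x ∈ A (j + 1) :=
    antitone_nat_of_succ_le hAmono (by omega : j + 1 ≤ m + 1) (hpmem _ (by omega) x)
  exact (hpnear _ hj x _ hpivot).trans hfar

end Bunch

theorem stmt_19_general {V : Type*} [MetricSpace V] (k : ℕ)
    (A : ℕ → Set V) (hAmono : ∀ i, A (i + 1) ⊆ A i)
    (hAk : A k = ∅)
    (p : ℕ → V → V)
    (hpmem : ∀ i ≤ k - 1, ∀ u, p i u ∈ A i)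
    (hpnear : ∀ i ≤ k - 1, ∀ u, ∀ w ∈ A i, dist u (p i u) ≤ dist u w)
    (B : V → Set V)
    (hB : ∀ u w, w ∈ B u ↔ ∃ i < k, w ∈ A i ∧ w ∉ A (i + 1) ∧
      (i + 1 < k → dist u w < dist u (p (i + 1) u)))
    (u v : V) (i₁ : ℕ)
    (us vs ws : ℕ → V)
    (hu0 : us 0 = u) (hv0 : vs 0 = v) (hw0 : ws 0 = p i₁ u)
    (hurec : ∀ t, us (t + 1) = vs t) (hvrec : ∀ t, vs (t + 1) = us t)
    (hwrec : ∀ t, ws (t + 1) = p (i₁ + t + 1) (us (t + 1)))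
    (hstart : dist u (p i₁ u) ≤ (i₁ : ℝ) * dist u v)
    (T : ℕ) (hreach : ∀ s < T, ws s ∉ B (vs s)) (hT : i₁ + T ≤ k - 1) :
    dist (us T) (ws T) ≤ ((i₁ : ℝ) + T) * dist u v := by
  have hws : ∀ t, ws t = p (i₁ + t) (us t) := by
    rintro (_ | t)
    · rw [hw0, hu0, Nat.add_zero]
    · exact hwrec t
  have hdist : ∀ t, dist (us t) (vs t) = dist u v := by
    intro t
    induction t with
    | zero => rw [hu0, hv0]
    | succ t ih => rw [hurec, hvrec, dist_comm, ih]
  induction T with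
  | zero => simpa [hws, hu0] using hstart
  | succ T ih =>
    have hwT : ws T ∈ A (i₁ + T) := hws T ▸ hpmem _ (by omega) _
    have hfar := dist_pivot_succ_le_of_notMem_bunch hAmono hAk hpmem hpnear hB (by omega) hwT
      (hreach T T.lt_succ_self)
    have hIH := ih (fun s hs => hreach s (hs.trans T.lt_succ_self)) (by omega)
    rw [hws, hurec, ← add_assoc]
    calc dist (vs T) (p (i₁ + T + 1) (vs T))
        ≤ dist (vs T) (us T) + dist (us T) (ws T) := hfar.trans (dist_triangle _ _ _)
      _ ≤ dist u v + (i₁ + T) * dist u v := by rw [dist_comm, hdist]; gcongr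
      _ = (i₁ + (T + 1 : ℕ)) * dist u v := by push_cast; ring

theorem stmt_19 {V : Type*} [MetricSpace V] [Fintype V] (k : ℕ) (hk : 1 ≤ k)
    (A : ℕ → Set V) (hA0 : A 0 = Set.univ) (hAmono : ∀ i, A (i + 1) ⊆ A i)
    (hAk : A k = ∅) (hAne : (A (k - 1)).Nonempty)
    (p : ℕ → V → V)
    (hpmem : ∀ i ≤ k - 1, ∀ u, p i u ∈ A i)
    (hpnear : ∀ i ≤ k - 1, ∀ u, ∀ w ∈ A i, dist u (p i u) ≤ dist u w)
    (B : V → Set V)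
    (hB : ∀ u w, w ∈ B u ↔ ∃ i < k, w ∈ A i ∧ w ∉ A (i + 1) ∧
      (i + 1 < k → dist u w < dist u (p (i + 1) u)))
    (u v : V) (i₁ : ℕ)
    (us vs ws : ℕ → V)
    (hu0 : us 0 = u) (hv0 : vs 0 = v) (hw0 : ws 0 = p i₁ u)
    (hurec : ∀ t, us (t + 1) = vs t) (hvrec : ∀ t, vs (t + 1) = us t)
    (hwrec : ∀ t, ws (t + 1) = p (i₁ + t + 1) (us (t + 1)))
    (hstart : dist u (p i₁ u) ≤ (i₁ : ℝ) * dist u v)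
    (T : ℕ) (hreach : ∀ s < T, ws s ∉ B (vs s)) (hT : i₁ + T ≤ k - 1) :
    dist (us T) (ws T) ≤ ((i₁ : ℝ) + T) * dist u v :=
  stmt_19_general k A hAmono hAk p hpmem hpnear B hB u v i₁ us vs ws hu0 hv0 hw0 hurec hvrec hwrec
    hstart T hreach hT
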